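/- For every n ≥ 1, the number of spanning trees of the ladder graph G^{(n)} equals the cardinality of the set 𝕋^{(n)} = {(T_1,…,T_n) ∈ {A,B,C,D}^n : (T_i, T_{i+1}) ≠ (A,B) for all i = 1,…,n−1}; in fact there is an explicit bijection Ψ_tree : 𝕋^{(n)} → {spanning trees of G^{(n)}}. -/

import Mathlib

open MeasureTheory Real
open scoped ENNReal NNReal

/-- The vertex set `{0, …, n} × {1, 2}` of the finite ladder `G^{(n)}`. -/
abbrev LadderV (n : ℕ) := Fin (n + 1) × Fin 2

/-- The ladder graph `G^{(n)}`: two vertices are adjacent iff their `ℓ¹`-distance is 1,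
i.e. either same column and different rows, or same row and neighboring columns. -/
def ladderGraph (n : ℕ) : SimpleGraph (LadderV n) where
  Adj u v := (u.1 = v.1 ∧ u.2 ≠ v.2) ∨ (u.2 = v.2 ∧ ((u.1 : ℕ) + 1 = v.1 ∨ (v.1 : ℕ) + 1 = u.1))
  symm := by
    constructor
    intro u v h
    rcases h with ⟨h1, h2⟩ | ⟨h1, h2⟩
    · exact Or.inl ⟨h1.symm, fun hc => h2 hc.symm⟩
    · exact Or.inr ⟨h1.symm, h2.symm⟩
  loopless := by
    constructor
    intro u h
    rcases h with ⟨-, h2⟩ | ⟨-, h2⟩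
    · exact h2 rfl
    · omega

/-- The lower horizontal edge `x_i = {(i−1,1),(i,1)}` (0-based index). -/
def edgeLow (n : ℕ) (i : Fin n) : Sym2 (LadderV n) :=
  s((i.castSucc, (0 : Fin 2)), (i.succ, (0 : Fin 2)))

/-- The upper horizontal edge `x̄_i = {(i−1,2),(i,2)}` (0-based index). -/
def edgeHigh (n : ℕ) (i : Fin n) : Sym2 (LadderV n) :=
  s((i.castSucc, (1 : Fin 2)), (i.succ, (1 : Fin 2)))

/-- The rung `z_i = {(i,1),(i,2)}`. -/
def edgeRung (n : ℕ) (i : Fin (n + 1)) : Sym2 (LadderV n) :=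
  s((i, (0 : Fin 2)), (i, (1 : Fin 2)))

/-- `x_v`: the sum of the weights of all edges incident to the vertex `v`. -/
noncomputable def vertexWeight (n : ℕ) (w : Sym2 (LadderV n) → ℝ) (v : LadderV n) : ℝ :=
  ∑ e ∈ (Set.toFinite ((ladderGraph n).incidenceSet v)).toFinset, w e

/-- The matrix `A^{(n)}(x)` (with 0-based indices; paper index `i` is `Fin`-index `i − 1`). -/
noncomputable def Amatrix (n : ℕ) (w : Sym2 (LadderV n) → ℝ) : Matrix (Fin n) (Fin n) ℝ :=
  Matrix.of fun k l =>
    if k = l then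
      1 / w (edgeRung n k.castSucc) + 1 / w (edgeLow n k) + 1 / w (edgeHigh n k)
        + 1 / w (edgeRung n k.succ)
    else if (k : ℕ) + 1 = l then -(1 / w (edgeRung n l.castSucc))
    else if (l : ℕ) + 1 = k then -(1 / w (edgeRung n k.castSucc))
    else 0

/-- The density `Φ^{(n)}(x, y, T)` of Coppersmith–Diaconis type, where the spanning tree is
given as a subgraph `H` (real exponents are `Real.rpow`). -/
noncomputable def Phi (a : ℝ) (n : ℕ) (w : Sym2 (LadderV n) → ℝ) (y : Fin n → ℝ)
    (H : SimpleGraph (LadderV n)) : ℝ :=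
  ((∏ i : Fin n, (w (edgeLow n i) * w (edgeHigh n i)) ^ (a - 3 / 2))
      * (∏ i : Fin (n + 1), w (edgeRung n i) ^ (a - 3 / 2))
      * ∏ e ∈ (Set.toFinite H.edgeSet).toFinset, w e)
    / (vertexWeight n w (0, 0) ^ (a + 1 / 2) * vertexWeight n w (0, 1) ^ a
        * (∏ i : Fin (n + 1),
            if 0 < (i : ℕ) ∧ (i : ℕ) < n then
              (vertexWeight n w (i, 0) * vertexWeight n w (i, 1)) ^ ((3 * a + 1) / 2)
            else 1)
        * vertexWeight n w (Fin.last n, 0) ^ (a + 1 / 2)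
        * vertexWeight n w (Fin.last n, 1) ^ (a + 1 / 2))
    * Real.exp (-(1 / 2) * (dotProduct y ((Amatrix n w).mulVec y)))

instance (n : ℕ) : Finite (SimpleGraph (LadderV n)) :=
  Finite.of_injective (fun G => G.Adj) fun _ _ h => SimpleGraph.ext h

/-- The type of spanning trees of the ladder `G^{(n)}`: connected acyclic spanning
subgraphs. -/
abbrev SpanningTree (n : ℕ) := {H : SimpleGraph (LadderV n) // H ≤ ladderGraph n ∧ H.IsTree}

instance (n : ℕ) : MeasurableSpace (SpanningTree n) := ⊤

instance (n : ℕ) : MeasurableSingletonClass (SpanningTree n) :=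
  ⟨fun _ => MeasurableSpace.measurableSet_top⟩

/-!
Each letter of a code deletes one edge of the ladder at its column `i`: `A` the right rung
`i + 1`, `B` the left rung `i`, `C` the upper edge, `D` the lower edge (the letters are
`0, 1, 2, 3 : Fin 4`). Forbidding `AB` is exactly what makes the `n` deleted edges distinct,
so what remains has `3n + 1 - n = |V| - 1` edges; it is connected, hence a spanning tree.

A spanning tree `T` is decoded column by column: `D` or `C` if a horizontal edge is missing,
otherwise `A` or `B` according to whether the two vertices of column `i` are already joined
through a rung at or left of `i` followed by complete squares (`LeftLinked`). In the `A` case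
the right rung would close a cycle, so `T` is contained in the tree of its code, hence equal to it.
-/

lemma SimpleGraph.IsTree.eq_of_le {V : Type*} [Finite V] {G G' : SimpleGraph V}
    (hG : G.IsTree) (hG' : G'.IsTree) (h : G ≤ G') : G = G' := by
  have hcard := (isTree_iff_connected_and_card.1 hG).2
  have hcard' := (isTree_iff_connected_and_card.1 hG').2
  rw [Nat.card_coe_set_eq] at hcard hcard'
  exact edgeSet_inj.1 (Set.eq_of_subset_of_ncard_le (edgeSet_subset_edgeSet.2 h) (by omega))

namespace LadderTree

open SimpleGraph

variable {n : ℕ}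

lemma edgeLow_injective : Function.Injective (edgeLow n) := by
  intro i j h
  simp [edgeLow, Fin.ext_iff] at h
  exact Fin.ext (by omega)

lemma edgeHigh_injective : Function.Injective (edgeHigh n) := by
  intro i j h
  simp [edgeHigh, Fin.ext_iff] at h
  exact Fin.ext (by omega)

lemma edgeRung_injective : Function.Injective (edgeRung n) := by
  intro i j h
  simpa [edgeRung] using h

lemma edgeLow_ne_edgeHigh (i j : Fin n) : edgeLow n i ≠ edgeHigh n j := by
  simp [edgeLow, edgeHigh]

lemma edgeLow_ne_edgeRung (i : Fin n) (k : Fin (n + 1)) : edgeLow n i ≠ edgeRung n k := by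
  simp [edgeLow, edgeRung]

lemma edgeHigh_ne_edgeRung (i : Fin n) (k : Fin (n + 1)) : edgeHigh n i ≠ edgeRung n k := by
  simp [edgeHigh, edgeRung]

def ladderEdge : Fin n ⊕ Fin n ⊕ Fin (n + 1) → Sym2 (LadderV n) :=
  Sum.elim (edgeLow n) (Sum.elim (edgeHigh n) (edgeRung n))

lemma ladderEdge_injective : Function.Injective (ladderEdge (n := n)) := by
  rintro (i | i | i) (j | j | j) h <;>
    simp only [ladderEdge, Sum.elim_inl, Sum.elim_inr] at h
  all_goals first
    | rw [edgeLow_injective h] | rw [edgeHigh_injective h] | rw [edgeRung_injective h]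
    | exact absurd h (edgeLow_ne_edgeHigh _ _) | exact absurd h.symm (edgeLow_ne_edgeHigh _ _)
    | exact absurd h (edgeLow_ne_edgeRung _ _) | exact absurd h.symm (edgeLow_ne_edgeRung _ _)
    | exact absurd h (edgeHigh_ne_edgeRung _ _) | exact absurd h.symm (edgeHigh_ne_edgeRung _ _)

lemma range_ladderEdge : Set.range (ladderEdge (n := n)) = (ladderGraph n).edgeSet := by
  ext e
  induction e with
  | h u v =>
    obtain ⟨a, r⟩ := u
    obtain ⟨b, s⟩ := v
    rw [SimpleGraph.mem_edgeSet]
    constructor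
    · rintro ⟨i | i | k, h⟩ <;>
        simp only [ladderEdge, Sum.elim_inl, Sum.elim_inr, edgeLow, edgeHigh, edgeRung,
          Sym2.eq_iff] at h <;>
        rcases h with ⟨⟨⟩, ⟨⟩⟩ | ⟨⟨⟩, ⟨⟩⟩ <;> simp [ladderGraph]
    · rintro (⟨rfl, hrs⟩ | ⟨rfl, hab | hab⟩) <;> dsimp only at *
      · refine ⟨Sum.inr (Sum.inr a), ?_⟩
        fin_cases r <;> fin_cases s <;> simp_all [ladderEdge, edgeRung, Sym2.eq_swap]
      · obtain ⟨i, rfl, rfl⟩ : ∃ i : Fin n, i.castSucc = a ∧ i.succ = b :=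
          ⟨⟨a, by omega⟩, rfl, Fin.ext hab⟩
        fin_cases r
        · exact ⟨Sum.inl i, rfl⟩
        · exact ⟨Sum.inr (Sum.inl i), rfl⟩
      · obtain ⟨i, rfl, rfl⟩ : ∃ i : Fin n, i.castSucc = b ∧ i.succ = a :=
          ⟨⟨b, by omega⟩, rfl, Fin.ext hab⟩
        rw [Sym2.eq_swap]
        fin_cases r
        · exact ⟨Sum.inl i, rfl⟩
        · exact ⟨Sum.inr (Sum.inl i), rfl⟩

lemma ncard_edgeSet_ladderGraph : (ladderGraph n).edgeSet.ncard = 3 * n + 1 := by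
  rw [← range_ladderEdge, Set.ncard_range_of_injective ladderEdge_injective]
  simp only [Nat.card_eq_fintype_card, Fintype.card_sum, Fintype.card_fin]
  omega

def NoAB (c : Fin n → Fin 4) : Prop :=
  ∀ (i : Fin n) (h : (i : ℕ) + 1 < n), ¬(c i = 0 ∧ c ⟨(i : ℕ) + 1, h⟩ = 1)

lemma NoAB.ne_one {c : Fin n → Fin 4} (hc : NoAB c) {i j : Fin n} (hij : i.succ = j.castSucc)
    (hi : c i = 0) : c j ≠ 1 := by
  have hj : (i : ℕ) + 1 = j := by simpa [Fin.ext_iff] using hij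
  intro h
  refine hc i (hj ▸ j.isLt) ⟨hi, ?_⟩
  rwa [show (⟨i + 1, _⟩ : Fin n) = j from Fin.ext hj]

lemma fin_four_cases (a : Fin 4) : a = 0 ∨ a = 1 ∨ a = 2 ∨ a = 3 := by
  fin_cases a <;> simp

def removedEdge (c : Fin n → Fin 4) (i : Fin n) : Sym2 (LadderV n) :=
  ![edgeRung n i.succ, edgeRung n i.castSucc, edgeHigh n i, edgeLow n i] (c i)

lemma removedEdge_mem_edgeSet (c : Fin n → Fin 4) (i : Fin n) :
    removedEdge c i ∈ (ladderGraph n).edgeSet := by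
  rw [← range_ladderEdge]
  rcases fin_four_cases (c i) with h | h | h | h <;> simp only [removedEdge, h]
  · exact ⟨Sum.inr (Sum.inr i.succ), rfl⟩
  · exact ⟨Sum.inr (Sum.inr i.castSucc), rfl⟩
  · exact ⟨Sum.inr (Sum.inl i), rfl⟩
  · exact ⟨Sum.inl i, rfl⟩

section removedEdge

variable {c : Fin n → Fin 4}

lemma edgeLow_mem_range_removedEdge {i : Fin n} :
    edgeLow n i ∈ Set.range (removedEdge c) ↔ c i = 3 := by
  refine ⟨fun ⟨j, hj⟩ => ?_, fun h => ⟨i, by simp [removedEdge, h]⟩⟩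
  rcases fin_four_cases (c j) with h | h | h | h <;> simp only [removedEdge, h] at hj
  · exact absurd hj.symm (edgeLow_ne_edgeRung _ _)
  · exact absurd hj.symm (edgeLow_ne_edgeRung _ _)
  · exact absurd hj.symm (edgeLow_ne_edgeHigh _ _)
  · rwa [← edgeLow_injective hj]

lemma edgeHigh_mem_range_removedEdge {i : Fin n} :
    edgeHigh n i ∈ Set.range (removedEdge c) ↔ c i = 2 := by
  refine ⟨fun ⟨j, hj⟩ => ?_, fun h => ⟨i, by simp [removedEdge, h]⟩⟩
  rcases fin_four_cases (c j) with h | h | h | h <;> simp only [removedEdge, h] at hj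
  · exact absurd hj.symm (edgeHigh_ne_edgeRung _ _)
  · exact absurd hj.symm (edgeHigh_ne_edgeRung _ _)
  · rwa [← edgeHigh_injective hj]
  · exact absurd hj (edgeLow_ne_edgeHigh _ _)

lemma edgeRung_mem_range_removedEdge {k : Fin (n + 1)} :
    edgeRung n k ∈ Set.range (removedEdge c) ↔
      (∃ i : Fin n, i.succ = k ∧ c i = 0) ∨ ∃ i : Fin n, i.castSucc = k ∧ c i = 1 := by
  constructor
  · rintro ⟨j, hj⟩
    rcases fin_four_cases (c j) with h | h | h | h <;> simp only [removedEdge, h] at hj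
    · exact .inl ⟨j, edgeRung_injective hj, h⟩
    · exact .inr ⟨j, edgeRung_injective hj, h⟩
    · exact absurd hj (edgeHigh_ne_edgeRung _ _)
    · exact absurd hj (edgeLow_ne_edgeRung _ _)
  · rintro (⟨i, rfl, h⟩ | ⟨i, rfl, h⟩) <;> exact ⟨i, by simp [removedEdge, h]⟩

lemma removedEdge_injective (hc : NoAB c) : Function.Injective (removedEdge c) := by
  intro i j hij
  rcases fin_four_cases (c i) with hi | hi | hi | hi <;>
    rcases fin_four_cases (c j) with hj | hj | hj | hj <;>
    simp only [removedEdge, hi, hj] at hij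
  all_goals first
    | exact Fin.succ_injective _ (edgeRung_injective hij)
    | exact Fin.castSucc_injective _ (edgeRung_injective hij)
    | exact edgeHigh_injective hij | exact edgeLow_injective hij
    | exact absurd hj (hc.ne_one (edgeRung_injective hij) hi)
    | exact absurd hi (hc.ne_one (edgeRung_injective hij).symm hj)
    | exact absurd hij (edgeLow_ne_edgeHigh _ _) | exact absurd hij.symm (edgeLow_ne_edgeHigh _ _)
    | exact absurd hij (edgeLow_ne_edgeRung _ _) | exact absurd hij.symm (edgeLow_ne_edgeRung _ _)
    | exact absurd hij (edgeHigh_ne_edgeRung _ _) | exact absurd hij.symm (edgeHigh_ne_edgeRung _ _)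

end removedEdge

inductive LeftLinked (H : SimpleGraph (LadderV n)) : Fin (n + 1) → Prop
  | rung {k : Fin (n + 1)} : H.Adj (k, 0) (k, 1) → LeftLinked H k
  | square {i : Fin n} : H.Adj (i.castSucc, 0) (i.succ, 0) → H.Adj (i.castSucc, 1) (i.succ, 1) →
      LeftLinked H i.castSucc → LeftLinked H i.succ

namespace LeftLinked

variable {H : SimpleGraph (LadderV n)} {k : Fin (n + 1)}

lemma reachable (h : LeftLinked H k) : H.Reachable (k, 0) (k, 1) := by
  induction h with
  | rung h => exact h.reachable
  | square h₀ h₁ _ ih => exact h₀.reachable.symm.trans (ih.trans h₁.reachable)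

lemma deleteEdges_edgeRung {m : Fin (n + 1)} (h : LeftLinked H k) (hk : k < m) :
    LeftLinked (H.deleteEdges {edgeRung n m}) k := by
  induction h with
  | rung h => exact .rung ⟨h, by simpa [edgeRung] using hk.ne⟩
  | square h₀ h₁ _ ih =>
    exact .square ⟨h₀, by simp [edgeRung]⟩ ⟨h₁, by simp [edgeRung]⟩
      (ih (Fin.castSucc_lt_succ.trans hk))

end LeftLinked

def codeTree (c : Fin n → Fin 4) : SimpleGraph (LadderV n) :=
  (ladderGraph n).deleteEdges (Set.range (removedEdge c))

section codeTree

variable {c : Fin n → Fin 4}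

lemma codeTree_adj_low {i : Fin n} :
    (codeTree c).Adj (i.castSucc, 0) (i.succ, 0) ↔ c i ≠ 3 := by
  rw [codeTree, deleteEdges_adj, ← edgeLow, edgeLow_mem_range_removedEdge]
  simp [ladderGraph]

lemma codeTree_adj_high {i : Fin n} :
    (codeTree c).Adj (i.castSucc, 1) (i.succ, 1) ↔ c i ≠ 2 := by
  rw [codeTree, deleteEdges_adj, ← edgeHigh, edgeHigh_mem_range_removedEdge]
  simp [ladderGraph]

lemma codeTree_adj_rung {k : Fin (n + 1)} : (codeTree c).Adj (k, 0) (k, 1) ↔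
    (∀ i : Fin n, i.succ = k → c i ≠ 0) ∧ ∀ i : Fin n, i.castSucc = k → c i ≠ 1 := by
  rw [codeTree, deleteEdges_adj, ← edgeRung, edgeRung_mem_range_removedEdge]
  simp [ladderGraph]

lemma ncard_edgeSet_codeTree (hc : NoAB c) : (codeTree c).edgeSet.ncard = 2 * n + 1 := by
  rw [codeTree, edgeSet_deleteEdges,
    Set.ncard_sdiff (Set.range_subset_iff.2 (removedEdge_mem_edgeSet c)),
    ncard_edgeSet_ladderGraph, Set.ncard_range_of_injective (removedEdge_injective hc),
    Nat.card_fin]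
  omega

lemma leftLinked_codeTree_iff (hc : NoAB c) {k : Fin (n + 1)} :
    LeftLinked (codeTree c) k ↔ ∀ i : Fin n, i.castSucc = k → c i ≠ 1 := by
  constructor
  · intro h
    induction h with
    | rung h => exact (codeTree_adj_rung.1 h).2
    | @square i h₀ h₁ _ ih =>
      intro j hj
      have hi : c i = 0 := by
        have := ih i rfl
        rcases fin_four_cases (c i) with h | h | h | h
        · exact h
        all_goals simp_all [codeTree_adj_low, codeTree_adj_high]
      exact hc.ne_one hj.symm hi
  · induction k using Fin.induction with
    | zero =>
      exact fun h => .rung (codeTree_adj_rung.2 ⟨fun i hi => absurd hi i.succ_ne_zero, h⟩)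
    | succ i ih =>
      intro h
      by_cases hi : c i = 0
      · exact .square (codeTree_adj_low.2 (by simp [hi])) (codeTree_adj_high.2 (by simp [hi]))
          (ih fun j hj => Fin.castSucc_injective _ hj ▸ by simp [hi])
      · exact .rung (codeTree_adj_rung.2 ⟨fun j hj => Fin.succ_injective _ hj ▸ hi, h⟩)

lemma codeTree_reachable_rung (hc : NoAB c) (k : Fin (n + 1)) :
    (codeTree c).Reachable (k, 0) (k, 1) := by
  induction k using Fin.reverseInduction with
  | last =>
    exact ((leftLinked_codeTree_iff hc).2 fun i hi =>
      absurd hi (Fin.castSucc_lt_last i).ne).reachable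
  | cast i ih =>
    by_cases hi : c i = 1
    · exact (codeTree_adj_low.2 (by simp [hi])).reachable.trans
        (ih.trans (codeTree_adj_high.2 (by simp [hi])).reachable.symm)
    · exact ((leftLinked_codeTree_iff hc).2 fun j hj =>
        Fin.castSucc_injective _ hj ▸ hi).reachable

lemma codeTree_reachable_low (hc : NoAB c) (i : Fin n) :
    (codeTree c).Reachable (i.castSucc, 0) (i.succ, 0) := by
  by_cases hi : c i = 3
  · exact (codeTree_reachable_rung hc _).trans
      ((codeTree_adj_high.2 (by simp [hi])).reachable.trans (codeTree_reachable_rung hc _).symm)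
  · exact (codeTree_adj_low.2 hi).reachable

lemma codeTree_connected (hc : NoAB c) : (codeTree c).Connected := by
  have hcol (k : Fin (n + 1)) : (codeTree c).Reachable (0, 0) (k, 0) := by
    induction k using Fin.induction with
    | zero => rfl
    | succ i ih => exact ih.trans (codeTree_reachable_low hc i)
  refine (connected_iff_exists_forall_reachable _).2 ⟨(0, 0), fun ⟨k, r⟩ => ?_⟩
  fin_cases r
  · exact hcol k
  · exact (hcol k).trans (codeTree_reachable_rung hc k)

lemma isTree_codeTree (hc : NoAB c) : (codeTree c).IsTree := by
  rw [isTree_iff_connected_and_card, Nat.card_coe_set_eq, ncard_edgeSet_codeTree hc]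
  refine ⟨codeTree_connected hc, ?_⟩
  simp only [Nat.card_eq_fintype_card, Fintype.card_prod, Fintype.card_fin]
  ring

end codeTree

open Classical in
noncomputable def treeCode (H : SimpleGraph (LadderV n)) (i : Fin n) : Fin 4 :=
  if ¬H.Adj (i.castSucc, 0) (i.succ, 0) then 3
  else if ¬H.Adj (i.castSucc, 1) (i.succ, 1) then 2
  else if LeftLinked H i.castSucc then 0 else 1

section treeCode

variable {H : SimpleGraph (LadderV n)} {i : Fin n}

lemma adj_of_treeCode_eq_zero (h : treeCode H i = 0) :
    H.Adj (i.castSucc, 0) (i.succ, 0) ∧ H.Adj (i.castSucc, 1) (i.succ, 1) ∧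
      LeftLinked H i.castSucc := by
  unfold treeCode at h
  split_ifs at h <;> simp_all

lemma not_leftLinked_of_treeCode_eq_one (h : treeCode H i = 1) : ¬LeftLinked H i.castSucc := by
  unfold treeCode at h
  split_ifs at h <;> simp_all

lemma not_adj_of_treeCode_eq_two (h : treeCode H i = 2) :
    ¬H.Adj (i.castSucc, 1) (i.succ, 1) := by
  unfold treeCode at h
  split_ifs at h <;> simp_all

lemma not_adj_of_treeCode_eq_three (h : treeCode H i = 3) :
    ¬H.Adj (i.castSucc, 0) (i.succ, 0) := by
  unfold treeCode at h
  split_ifs at h <;> simp_all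

lemma noAB_treeCode (H : SimpleGraph (LadderV n)) : NoAB (treeCode H) := by
  intro i hi ⟨h₀, h₁⟩
  obtain ⟨hl, hh, hL⟩ := adj_of_treeCode_eq_zero h₀
  exact not_leftLinked_of_treeCode_eq_one h₁ (.square hl hh hL)

lemma removedEdge_treeCode_notMem (hH : H.IsAcyclic) (i : Fin n) :
    removedEdge (treeCode H) i ∉ H.edgeSet := by
  rcases fin_four_cases (treeCode H i) with h | h | h | h <;>
    simp only [removedEdge, h] <;> intro hr
  · obtain ⟨hl, hh, hL⟩ := adj_of_treeCode_eq_zero h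
    -- the squares left of the rung `i.succ` join its ends without it, so it is not a bridge
    refine isBridge_iff.1 (isAcyclic_iff_forall_adj_isBridge.1 hH hr) ?_
    have hl' : (H.deleteEdges {edgeRung n i.succ}).Adj (i.castSucc, 0) (i.succ, 0) :=
      ⟨hl, by simp [edgeRung]⟩
    have hh' : (H.deleteEdges {edgeRung n i.succ}).Adj (i.castSucc, 1) (i.succ, 1) :=
      ⟨hh, by simp [edgeRung]⟩
    exact hl'.reachable.symm.trans
      ((hL.deleteEdges_edgeRung Fin.castSucc_lt_succ).reachable.trans hh'.reachable)
  · exact not_leftLinked_of_treeCode_eq_one h (.rung hr)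
  · exact not_adj_of_treeCode_eq_two h hr
  · exact not_adj_of_treeCode_eq_three h hr

lemma le_codeTree_treeCode (hle : H ≤ ladderGraph n) (hH : H.IsAcyclic) :
    H ≤ codeTree (treeCode H) := by
  intro u v huv
  rw [codeTree, deleteEdges_adj]
  refine ⟨hle huv, fun ⟨i, hi⟩ => removedEdge_treeCode_notMem hH i ?_⟩
  rw [hi]
  exact huv

lemma codeTree_treeCode (hle : H ≤ ladderGraph n) (hH : H.IsTree) :
    codeTree (treeCode H) = H :=
  (hH.eq_of_le (isTree_codeTree (noAB_treeCode H)) (le_codeTree_treeCode hle hH.isAcyclic)).symm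

end treeCode

lemma treeCode_codeTree {c : Fin n → Fin 4} (hc : NoAB c) : treeCode (codeTree c) = c := by
  funext i
  unfold treeCode
  simp only [codeTree_adj_low, codeTree_adj_high, leftLinked_codeTree_iff hc]
  rcases fin_four_cases (c i) with h | h | h | h <;> simp [h]

noncomputable def spanningTreeEquiv (n : ℕ) :
    {c : Fin n → Fin 4 // NoAB c} ≃ SpanningTree n where
  toFun c := ⟨codeTree c.1, deleteEdges_le _, isTree_codeTree c.2⟩
  invFun T := ⟨treeCode T.1, noAB_treeCode T.1⟩
  left_inv c := Subtype.ext (treeCode_codeTree c.2)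
  right_inv T := Subtype.ext (codeTree_treeCode T.2.1 T.2.2)

end LadderTree

theorem spanning_tree_bijection_general (n : ℕ) :
    Nonempty
      ({f : Fin n → Fin 4 //
          ∀ (i : Fin n) (h : (i : ℕ) + 1 < n), ¬(f i = 0 ∧ f ⟨(i : ℕ) + 1, h⟩ = 1)} ≃
        SpanningTree n) ∧
    Nat.card {f : Fin n → Fin 4 //
        ∀ (i : Fin n) (h : (i : ℕ) + 1 < n), ¬(f i = 0 ∧ f ⟨(i : ℕ) + 1, h⟩ = 1)} =
      Nat.card (SpanningTree n) :=
  ⟨⟨LadderTree.spanningTreeEquiv n⟩, Nat.card_congr (LadderTree.spanningTreeEquiv n)⟩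

/-- Lemma 2.7: for every `n ≥ 1` there is an explicit bijection between
`𝕋^{(n)} = {(T_1,…,T_n) ∈ {A,B,C,D}^n : (T_i, T_{i+1}) ≠ (A,B)}` (labels `A,B,C,D`
encoded as `0,1,2,3 : Fin 4`) and the set of spanning trees of the ladder `G^{(n)}`;
in particular the two sets have the same cardinality. -/
theorem spanning_tree_bijection (n : ℕ) (hn : 1 ≤ n) :
    Nonempty
      ({f : Fin n → Fin 4 //
          ∀ (i : Fin n) (h : (i : ℕ) + 1 < n), ¬(f i = 0 ∧ f ⟨(i : ℕ) + 1, h⟩ = 1)} ≃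
        SpanningTree n) ∧
    Nat.card {f : Fin n → Fin 4 //
        ∀ (i : Fin n) (h : (i : ℕ) + 1 < n), ¬(f i = 0 ∧ f ⟨(i : ℕ) + 1, h⟩ = 1)} =
      Nat.card (SpanningTree n) :=
  spanning_tree_bijection_general n
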